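/- arXiv:2012.12551 — 7 statements merged into one kernel-verified Lean document; each statement's English description precedes it below -/
import Mathlib

section
/- Let P ≥ 0 be a real number and let θ, ξ ∈ [0, π/2] be angles with θ + ξ ≤ π/2. Then ln(1 + P·cos²(θ + ξ)) ≥ ln(1 + P·cos²(ξ)) − sin(θ)·K(P), where K(x) := πx/(2√(x + 1)). -/
open Real

/-- K(x) := πx / (2√(x+1)). -/
noncomputable def Kfun (x : ℝ) : ℝ := Real.pi * x / (2 * Real.sqrt (x + 1))

/-!
The function `f t = log (1 + P cos² t)` has derivative `-2P sin t cos t / (1 + P cos² t)`, and by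
AM-GM `2 √(P+1) |sin t cos t| ≤ sin² t + (P+1) cos² t = 1 + P cos² t`, so `f` is
`P / √(P+1)`-Lipschitz. Hence `f ξ - f (θ + ξ) ≤ θ P / √(P+1)`, and Jordan's inequality
`θ ≤ (π/2) sin θ` on `[0, π/2]` turns this into `sin θ · K(P)`.
-/

theorem Kfun_eq_pi_div_two_mul (x : ℝ) : Kfun x = π / 2 * (x / √(x + 1)) := by
  rw [Kfun]
  ring

theorem hasDerivAt_log_one_add_mul_cos_sq {P : ℝ} (hP : 0 ≤ P) (t : ℝ) :
    HasDerivAt (fun t => log (1 + P * cos t ^ 2))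
      (-(2 * P * sin t * cos t) / (1 + P * cos t ^ 2)) t := by
  have hpos : 0 < 1 + P * cos t ^ 2 := by positivity
  have hinner : HasDerivAt (fun t => 1 + P * cos t ^ 2) (P * (2 * cos t ^ 1 * -sin t)) t :=
    (((hasDerivAt_cos t).pow 2).const_mul P).const_add 1
  convert hinner.log hpos.ne' using 1
  ring

theorem abs_two_mul_mul_sin_mul_cos_div_le {P : ℝ} (hP : 0 ≤ P) (t : ℝ) :
    |2 * P * sin t * cos t| / (1 + P * cos t ^ 2) ≤ P / √(P + 1) := by
  have hpos : 0 < 1 + P * cos t ^ 2 := by positivity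
  have hsqrt : 0 < √(P + 1) := sqrt_pos.mpr (by linarith)
  have hsq : √(P + 1) ^ 2 = P + 1 := sq_sqrt (by linarith)
  have amgm : 2 * √(P + 1) * |sin t| * |cos t| ≤ 1 + P * cos t ^ 2 := by
    nlinarith [sq_nonneg (|sin t| - √(P + 1) * |cos t|), sq_abs (sin t), sq_abs (cos t),
      sin_sq_add_cos_sq t]
  rw [div_le_div_iff₀ hpos hsqrt, abs_mul, abs_mul, abs_mul, abs_of_nonneg hP, abs_two]
  nlinarith [mul_le_mul_of_nonneg_left amgm hP]

theorem abs_log_one_add_mul_cos_sq_sub_le {P : ℝ} (hP : 0 ≤ P) (x y : ℝ) :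
    |log (1 + P * cos x ^ 2) - log (1 + P * cos y ^ 2)| ≤ P / √(P + 1) * |x - y| := by
  have hderiv t (_ : t ∈ Set.univ) :=
    (hasDerivAt_log_one_add_mul_cos_sq hP t).hasDerivWithinAt (s := Set.univ)
  have hbound t (_ : t ∈ Set.univ) :
      ‖-(2 * P * sin t * cos t) / (1 + P * cos t ^ 2)‖ ≤ P / √(P + 1) := by
    rw [norm_div, norm_neg, Real.norm_eq_abs, Real.norm_of_nonneg (by positivity)]
    exact abs_two_mul_mul_sin_mul_cos_div_le hP t
  simpa only [Real.norm_eq_abs] using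
    convex_univ.norm_image_sub_le_of_norm_hasDerivWithin_le hderiv hbound
      (Set.mem_univ y) (Set.mem_univ x)

theorem mul_le_sin_mul_Kfun {P θ : ℝ} (hP : 0 ≤ P) (hθ : θ ∈ Set.Icc 0 (π / 2)) :
    P / √(P + 1) * θ ≤ sin θ * Kfun P := by
  have jordan : θ ≤ π / 2 * sin θ := by
    have := mul_le_sin hθ.1 hθ.2
    rw [div_mul_eq_mul_div, div_le_iff₀ pi_pos] at this
    linarith
  rw [Kfun_eq_pi_div_two_mul, ← mul_assoc, mul_comm (sin θ), mul_comm (P / √(P + 1))]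
  exact mul_le_mul_of_nonneg_right jordan (by positivity)

theorem stmt_0_general (P θ ξ : ℝ) (hP : 0 ≤ P)
    (hθ : θ ∈ Set.Icc 0 (Real.pi / 2)) :
    Real.log (1 + P * Real.cos (θ + ξ) ^ 2) ≥
      Real.log (1 + P * Real.cos ξ ^ 2) - Real.sin θ * Kfun P := by
  have lipschitz := abs_log_one_add_mul_cos_sq_sub_le hP ξ (θ + ξ)
  rw [sub_add_cancel_right, abs_neg, abs_of_nonneg hθ.1] at lipschitz
  linarith [(abs_le.mp lipschitz).2, mul_le_sin_mul_Kfun hP hθ]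

/-- For `P ≥ 0` and angles `θ, ξ ∈ [0, π/2]` with `θ + ξ ≤ π/2`,
`ln(1 + P·cos²(θ+ξ)) ≥ ln(1 + P·cos²ξ) − sin θ · K(P)`. -/
theorem stmt_0 (P θ ξ : ℝ) (hP : 0 ≤ P)
    (hθ : θ ∈ Set.Icc 0 (Real.pi / 2)) (hξ : ξ ∈ Set.Icc 0 (Real.pi / 2))
    (hsum : θ + ξ ≤ Real.pi / 2) :
    Real.log (1 + P * Real.cos (θ + ξ) ^ 2) ≥
      Real.log (1 + P * Real.cos ξ ^ 2) - Real.sin θ * Kfun P :=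
  stmt_0_general P θ ξ hP hθ
end

section
/- For every real P ≥ 0 and every ξ ∈ [0, π/2], it holds that 2·P·sin(ξ)·cos(ξ)/(P·cos²(ξ) + 1) ≤ P/√(P + 1), with equality attained when cos²(ξ) = 1/(P + 2) (for P > 0). -/
open Real

/-- For `P ≥ 0` and `ξ ∈ [0, π/2]`,
`2·P·sin ξ·cos ξ / (P·cos²ξ + 1) ≤ P/√(P+1)`, with equality when
`cos²ξ = 1/(P+2)` (for `P > 0`). -/
theorem stmt_1 :
    (∀ P ξ : ℝ, 0 ≤ P → ξ ∈ Set.Icc 0 (Real.pi / 2) →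
      2 * P * Real.sin ξ * Real.cos ξ / (P * Real.cos ξ ^ 2 + 1) ≤
        P / Real.sqrt (P + 1)) ∧
    (∀ P ξ : ℝ, 0 < P → ξ ∈ Set.Icc 0 (Real.pi / 2) →
      Real.cos ξ ^ 2 = 1 / (P + 2) →
      2 * P * Real.sin ξ * Real.cos ξ / (P * Real.cos ξ ^ 2 + 1) =
        P / Real.sqrt (P + 1)) := by
  constructor
  · intro P ξ hP hξ
    set s := Real.sin ξ with hs
    set c := Real.cos ξ with hc
    have hs0 : 0 ≤ s := Real.sin_nonneg_of_nonneg_of_le_pi hξ.1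
      (le_trans hξ.2 (by linarith [Real.pi_pos]))
    have hc0 : 0 ≤ c := Real.cos_nonneg_of_mem_Icc
      ⟨by linarith [hξ.1, Real.pi_pos], hξ.2⟩
    have hpyth : s ^ 2 + c ^ 2 = 1 := Real.sin_sq_add_cos_sq ξ
    have hA : 0 < Real.sqrt (P + 1) := Real.sqrt_pos.2 (by linarith)
    have hA2 : Real.sqrt (P + 1) ^ 2 = P + 1 := Real.sq_sqrt (by linarith)
    have hden : 0 < P * c ^ 2 + 1 := by positivity
    rw [div_le_div_iff₀ hden hA]
    nlinarith [mul_nonneg hP (sq_nonneg (Real.sqrt (P + 1) * c - s)), sq_nonneg s,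
      mul_nonneg hs0 hc0, hA.le]
  · intro P ξ hP hξ hceq
    set s := Real.sin ξ with hs
    set c := Real.cos ξ with hc
    have hs0 : 0 ≤ s := Real.sin_nonneg_of_nonneg_of_le_pi hξ.1
      (le_trans hξ.2 (by linarith [Real.pi_pos]))
    have hc0 : 0 ≤ c := Real.cos_nonneg_of_mem_Icc
      ⟨by linarith [hξ.1, Real.pi_pos], hξ.2⟩
    have hpyth : s ^ 2 + c ^ 2 = 1 := Real.sin_sq_add_cos_sq ξ
    have hA : 0 < Real.sqrt (P + 1) := Real.sqrt_pos.2 (by linarith)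
    have hA2 : Real.sqrt (P + 1) ^ 2 = P + 1 := Real.sq_sqrt (by linarith)
    have hden : 0 < P * c ^ 2 + 1 := by positivity
    have hs2 : s ^ 2 = (P + 1) * c ^ 2 := by
      have hP2 : (0:ℝ) < P + 2 := by linarith
      field_simp at hceq ⊢
      nlinarith [hpyth]
    have hsc : s = Real.sqrt (P + 1) * c := by
      have hac : 0 ≤ Real.sqrt (P + 1) * c := mul_nonneg hA.le hc0
      nlinarith [hs2, hA2, sq_nonneg (s - Real.sqrt (P + 1) * c),
        sq_nonneg (s + Real.sqrt (P + 1) * c)]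
    rw [div_eq_div_iff hden.ne' hA.ne']
    rw [hsc]
    nlinarith [hA2, hpyth]
end

section
/- Let V be a complex inner product space and let a, b, c ∈ V be nonzero vectors. Define the Hermitian angle between nonzero vectors u, v as ∠⟨u, v⟩ := arccos(|⟨u, v⟩|/(‖u‖·‖v‖)) ∈ [0, π/2]. Then the triangle inequality ∠⟨a, c⟩ ≤ ∠⟨a, b⟩ + ∠⟨b, c⟩ holds. -/
/-! For the real inner product `re ⟪u, v⟫` on `V` and `‖z‖ = 1`, `re (z * ⟪u, v⟫) ≤ ‖⟪u, v⟫‖`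
with equality for a suitable phase `z`, so the Hermitian angle is the least real angle between
`u` and the vectors `z • v`. Rotating `b` and `c` by optimal phases and applying the triangle
inequality for real angles gives the claim. -/

open scoped InnerProductSpace

/-- The Hermitian angle between nonzero vectors of a complex inner product space:
`∠⟨u, v⟩ = arccos(|⟨u, v⟩| / (‖u‖·‖v‖)) ∈ [0, π/2]`. -/
noncomputable def hermitianAngle {V : Type*} [NormedAddCommGroup V]
    [InnerProductSpace ℂ V] (u v : V) : ℝ :=
  Real.arccos (‖(⟪u, v⟫_ℂ : ℂ)‖ / (‖u‖ * ‖v‖))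

open InnerProductGeometry

section

attribute [local instance] InnerProductSpace.complexToReal

variable {V : Type*} [NormedAddCommGroup V] [InnerProductSpace ℂ V]

lemma angle_smul_right_of_norm_eq_one {z : ℂ} (hz : ‖z‖ = 1) (u v : V) :
    angle u (z • v) = Real.arccos ((z * ⟪u, v⟫_ℂ).re / (‖u‖ * ‖v‖)) := by
  rw [angle, norm_smul, hz, one_mul, real_inner_eq_re_inner ℂ, inner_smul_right]
  rfl

lemma angle_smul_smul_of_norm_eq_one {z : ℂ} (hz : ‖z‖ = 1) (u v : V) :
    angle (z • u) (z • v) = angle u v := by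
  have hinner : ⟪z • u, z • v⟫_ℂ = ⟪u, v⟫_ℂ := by
    rw [inner_smul_left, inner_smul_right, ← mul_assoc, Complex.conj_mul', hz]
    simp
  simp only [angle, norm_smul, hz, one_mul, real_inner_eq_re_inner ℂ, hinner]

lemma hermitianAngle_le_angle_smul {z : ℂ} (hz : ‖z‖ = 1) (u v : V) :
    hermitianAngle u v ≤ angle u (z • v) := by
  rw [angle_smul_right_of_norm_eq_one hz]
  refine Real.arccos_le_arccos (div_le_div_of_nonneg_right ?_ (by positivity))
  calc (z * ⟪u, v⟫_ℂ).re ≤ ‖z * ⟪u, v⟫_ℂ‖ := Complex.re_le_norm _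
    _ = ‖⟪u, v⟫_ℂ‖ := by rw [norm_mul, hz, one_mul]

lemma exists_angle_smul_eq_hermitianAngle (u v : V) :
    ∃ z : ℂ, ‖z‖ = 1 ∧ angle u (z • v) = hermitianAngle u v := by
  obtain ⟨z, hz, hzuv⟩ := Complex.exists_norm_eq_mul_self ⟪u, v⟫_ℂ
  refine ⟨z, hz, ?_⟩
  rw [angle_smul_right_of_norm_eq_one hz, ← hzuv, Complex.ofReal_re]
  rfl

end

theorem stmt_3_general {V : Type*} [NormedAddCommGroup V] [InnerProductSpace ℂ V]
    (a b c : V) :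
    hermitianAngle a c ≤ hermitianAngle a b + hermitianAngle b c := by
  let _ : InnerProductSpace ℝ V := InnerProductSpace.complexToReal
  obtain ⟨z₁, hz₁, hab⟩ := exists_angle_smul_eq_hermitianAngle a b
  obtain ⟨z₂, hz₂, hbc⟩ := exists_angle_smul_eq_hermitianAngle b c
  have hz : ‖z₁ * z₂‖ = 1 := by rw [norm_mul, hz₁, hz₂, one_mul]
  calc hermitianAngle a c ≤ angle a ((z₁ * z₂) • c) := hermitianAngle_le_angle_smul hz a c
    _ ≤ angle a (z₁ • b) + angle (z₁ • b) ((z₁ * z₂) • c) := angle_le_angle_add_angle _ _ _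
    _ = hermitianAngle a b + hermitianAngle b c := by
      rw [mul_smul, angle_smul_smul_of_norm_eq_one hz₁, hab, hbc]

/-- Triangle inequality for Hermitian angles: for nonzero `a, b, c`,
`∠⟨a, c⟩ ≤ ∠⟨a, b⟩ + ∠⟨b, c⟩`. -/
theorem stmt_3 {V : Type*} [NormedAddCommGroup V] [InnerProductSpace ℂ V]
    (a b c : V) (ha : a ≠ 0) (hb : b ≠ 0) (hc : c ≠ 0) :
    hermitianAngle a c ≤ hermitianAngle a b + hermitianAngle b c :=
  stmt_3_general a b c
end

section
/- For all integers b ≥ 0 and N ≥ 2, it holds that 2^b · B(2^b, 1 + 1/(N − 1)) ≤ 2^{−b/(N − 1)}, where B(p, q) = Γ(p)Γ(q)/Γ(p+q) is the Euler Beta function. -/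
/-!
With `x = 2^b` and `s = 1/(N-1) ∈ (0, 1]`, we have `x · B(x, 1+s) = Γ(1+s) · Γ(x+1) / Γ(x+1+s)`.
By convexity of `Γ`, `Γ(1+s) ≤ max (Γ 1) (Γ 2) = 1`. Since `x + 1 = (1-s)(x+1+s) + s(x+s)`,
log-convexity of `Γ` together with `Γ(x+s) = Γ(x+1+s)/(x+s)` gives Gautschi's lower bound
`(x+s)^s Γ(x+1) ≤ Γ(x+1+s)`, hence `x · B(x, 1+s) ≤ (x+s)^{-s} ≤ x^{-s}`.
-/

/-- Euler Beta function `B(p, q) = Γ(p)Γ(q)/Γ(p+q)`. -/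
noncomputable def eulerBeta (p q : ℝ) : ℝ :=
  Real.Gamma p * Real.Gamma q / Real.Gamma (p + q)

open Real Set

namespace Real

theorem Gamma_one_add_le_one {s : ℝ} (hs₀ : 0 ≤ s) (hs₁ : s ≤ 1) : Gamma (1 + s) ≤ 1 := by
  have hmem : 1 + s ∈ segment ℝ (1 : ℝ) 2 := by
    rw [segment_eq_Icc (by norm_num)]
    constructor <;> linarith
  simpa [Gamma_two] using convexOn_Gamma.le_on_segment (by norm_num) (by norm_num) hmem

theorem rpow_mul_Gamma_le_Gamma_add {x s : ℝ} (hxs : 0 < x + s) (hs₀ : 0 ≤ s) (hs₁ : s ≤ 1) :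
    (x + s) ^ s * Gamma (x + 1) ≤ Gamma (x + 1 + s) := by
  have hconv := convexOn_log_Gamma.2 (mem_Ioi.2 (by linarith : 0 < x + 1 + s)) (mem_Ioi.2 hxs)
    (by linarith : 0 ≤ 1 - s) hs₀ (by ring)
  have hpoint : (1 - s) * (x + 1 + s) + s * (x + s) = x + 1 := by ring
  have hrec : log (Gamma (x + s)) = log (Gamma (x + 1 + s)) - log (x + s) := by
    rw [add_right_comm, Gamma_add_one hxs.ne', log_mul hxs.ne' (Gamma_pos_of_pos hxs).ne']
    ring
  simp only [Function.comp_apply, smul_eq_mul, hpoint, hrec] at hconv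
  have hΓ : 0 < Gamma (x + 1) := Gamma_pos_of_pos (by linarith)
  rw [← log_le_log_iff (mul_pos (rpow_pos_of_pos hxs s) hΓ) (Gamma_pos_of_pos (by linarith)),
    log_mul (rpow_pos_of_pos hxs s).ne' hΓ.ne', log_rpow hxs]
  linarith

end Real

theorem mul_eulerBeta_one_add_le {x s : ℝ} (hx : 0 < x) (hs₀ : 0 ≤ s) (hs₁ : s ≤ 1) :
    x * eulerBeta x (1 + s) ≤ x ^ (-s) := by
  have hxs : 0 < x + s := by linarith
  have hG : 0 < Gamma (x + 1 + s) := Gamma_pos_of_pos (by linarith)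
  have hratio : Gamma (x + 1) / Gamma (x + 1 + s) ≤ (x + s) ^ (-s) := by
    rw [div_le_iff₀ hG, rpow_neg hxs.le, le_inv_mul_iff₀ (rpow_pos_of_pos hxs s)]
    exact rpow_mul_Gamma_le_Gamma_add hxs hs₀ hs₁
  calc x * eulerBeta x (1 + s)
      = Gamma (1 + s) * (Gamma (x + 1) / Gamma (x + 1 + s)) := by
        rw [eulerBeta, Gamma_add_one hx.ne', ← add_assoc]; ring
    _ ≤ 1 * (x + s) ^ (-s) :=
        mul_le_mul (Gamma_one_add_le_one hs₀ hs₁) hratio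
          (div_nonneg (Gamma_pos_of_pos (by linarith)).le hG.le) zero_le_one
    _ ≤ x ^ (-s) := by
        rw [one_mul]
        exact rpow_le_rpow_of_nonpos hx (by linarith) (by linarith)

/-- RVQ quantization-error bound: for integers `b ≥ 0` and `N ≥ 2`,
`2^b · B(2^b, 1 + 1/(N−1)) ≤ 2^{−b/(N−1)}`. -/
theorem stmt_7 (b N : ℕ) (hN : 2 ≤ N) :
    (2 : ℝ) ^ b * eulerBeta ((2 : ℝ) ^ b) (1 + 1 / ((N : ℝ) - 1)) ≤
      (2 : ℝ) ^ (-(b : ℝ) / ((N : ℝ) - 1)) := by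
  have hN₁ : (1 : ℝ) ≤ (N : ℝ) - 1 := by
    have : (2 : ℝ) ≤ N := by exact_mod_cast hN
    linarith
  have hexp : (2 : ℝ) ^ (-(b : ℝ) / ((N : ℝ) - 1)) =
      ((2 : ℝ) ^ b) ^ (-(1 / ((N : ℝ) - 1))) := by
    rw [← rpow_natCast, ← rpow_mul zero_le_two]
    ring_nf
  rw [hexp]
  exact mul_eulerBeta_one_add_le (by positivity) (by positivity) ((div_le_one (by linarith)).2 hN₁)
end

section
/- Fix a real a > 0 and define 𝒰(z, a) := z·B(z, 1 + a) (B the Euler Beta function). Then, as z → ∞, (1 − 𝒰(z, a))² − (1 − 𝒰(z, a)/2 − 𝒰(z, 2a))⁴ = O(z^{−2a}); that is, there exist constants C > 0 and z₀ > 0 such that |(1 − 𝒰(z, a))² − (1 − 𝒰(z, a)/2 − 𝒰(z, 2a))⁴| ≤ C·z^{−2a} for all z ≥ z₀. -/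
/-- `𝒰(z, a) := z·B(z, 1 + a)`. -/
noncomputable def Ufun (z a : ℝ) : ℝ := z * eulerBeta z (1 + a)

open Real

theorem rpow_mul_Gamma_add_one_le {x a : ℝ} (hx : 0 < x) (ha : 0 ≤ a) :
    x ^ a * Gamma (x + 1) ≤ Gamma (x + 1 + a) := by
  rcases ha.eq_or_lt with rfl | ha
  · simp
  have hΓx : 0 < Gamma x := Gamma_pos_of_pos hx
  have hΓx1 : 0 < Gamma (x + 1) := Gamma_pos_of_pos (by linarith)
  have hΓxa : 0 < Gamma (x + 1 + a) := Gamma_pos_of_pos (by linarith)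
  -- the slope of the convex `log ∘ Gamma` over `[x, x + 1]` is `log x`
  have hslope := convexOn_log_Gamma.slope_mono_adjacent (x := x) (y := x + 1) (z := x + 1 + a)
    hx (Set.mem_Ioi.2 (by linarith)) (by linarith) (by linarith)
  have hlog : log (Gamma (x + 1)) - log (Gamma x) = log x := by
    rw [Gamma_add_one hx.ne', log_mul hx.ne' hΓx.ne']; ring
  simp only [Function.comp_apply, hlog, add_sub_cancel_left, div_one,
    le_div_iff₀ ha, mul_comm (log x)] at hslope
  rw [← le_div_iff₀ hΓx1, rpow_def_of_pos hx, mul_comm,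
    ← log_le_log_iff (exp_pos _) (by positivity), log_exp, log_div hΓxa.ne' hΓx1.ne']
  exact hslope

theorem Ufun_eq {z : ℝ} (hz : 0 < z) (a : ℝ) :
    Ufun z a = Gamma (z + 1) * Gamma (1 + a) / Gamma (z + 1 + a) := by
  rw [Ufun, eulerBeta, Gamma_add_one hz.ne', add_assoc, mul_div_assoc', mul_assoc]

theorem Ufun_nonneg {z a : ℝ} (hz : 0 < z) (ha : -1 < a) : 0 ≤ Ufun z a := by
  rw [Ufun_eq hz]
  have := Gamma_pos_of_pos (show 0 < z + 1 by linarith)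
  have := Gamma_pos_of_pos (show 0 < 1 + a by linarith)
  have := Gamma_pos_of_pos (show 0 < z + 1 + a by linarith)
  positivity

theorem Ufun_le_Gamma_mul_rpow_neg {z a : ℝ} (hz : 0 < z) (ha : 0 ≤ a) :
    Ufun z a ≤ Gamma (1 + a) * z ^ (-a) := by
  have hΓxa : 0 < Gamma (z + 1 + a) := Gamma_pos_of_pos (by linarith)
  have hΓa : 0 < Gamma (1 + a) := Gamma_pos_of_pos (by linarith)
  rw [Ufun_eq hz, div_le_iff₀ hΓxa, rpow_neg hz.le, mul_comm (Gamma (z + 1)), mul_assoc,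
    mul_le_mul_iff_right₀ hΓa, inv_mul_eq_div, le_div_iff₀ (by positivity), mul_comm]
  exact rpow_mul_Gamma_add_one_le hz ha

theorem abs_sq_sub_pow_four_le {x y u c₁ c₂ : ℝ} (hx₀ : 0 ≤ x) (hx : x ≤ c₁ * u)
    (hy₀ : 0 ≤ y) (hy : y ≤ c₂ * u ^ 2) (hc₂ : 0 ≤ c₂) (hu₀ : 0 ≤ u) (hu₁ : u ≤ 1) :
    |(1 - x) ^ 2 - (1 - x / 2 - y) ^ 4| ≤
      (c₁ ^ 2 + 4 * c₂ + (c₁ / 2 + c₂) ^ 2 * (6 + (c₁ / 2 + c₂) ^ 2)) * u ^ 2 := by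
  set s := x / 2 + y with hs_def
  set d := c₁ / 2 + c₂ with hd_def
  have hs₀ : 0 ≤ s := by positivity
  have hs : s ≤ d * u := by
    nlinarith [mul_le_mul_of_nonneg_left (pow_le_of_le_one hu₀ hu₁ two_ne_zero) hc₂]
  have hx2 : x ^ 2 ≤ c₁ ^ 2 * u ^ 2 := by nlinarith
  have hs2 : s ^ 2 ≤ d ^ 2 * u ^ 2 := by nlinarith
  have hsd : s ^ 2 ≤ d ^ 2 := by nlinarith [pow_le_one₀ (n := 2) hu₀ hu₁]
  have hE :
      (1 - x) ^ 2 - (1 - x / 2 - y) ^ 4 = x ^ 2 + 4 * y - s ^ 2 * ((s - 2) ^ 2 + 2) := by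
    rw [hs_def]; ring
  rw [hE, abs_le]
  constructor <;> nlinarith

/-- As `z → ∞`,
`(1 − 𝒰(z, a))² − (1 − 𝒰(z, a)/2 − 𝒰(z, 2a))⁴ = O(z^{−2a})`. -/
theorem stmt_14 (a : ℝ) (ha : 0 < a) :
    ∃ C > (0 : ℝ), ∃ z₀ > (0 : ℝ), ∀ z ≥ z₀,
      |(1 - Ufun z a) ^ 2 - (1 - Ufun z a / 2 - Ufun z (2 * a)) ^ 4| ≤
        C * z ^ (-(2 * a)) := by
  have hc₁ : 0 < Gamma (1 + a) := Gamma_pos_of_pos (by linarith)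
  have hc₂ : 0 < Gamma (1 + 2 * a) := Gamma_pos_of_pos (by linarith)
  set c₁ := Gamma (1 + a)
  set c₂ := Gamma (1 + 2 * a)
  refine ⟨c₁ ^ 2 + 4 * c₂ + (c₁ / 2 + c₂) ^ 2 * (6 + (c₁ / 2 + c₂) ^ 2), by positivity,
    1, one_pos, fun z hz => ?_⟩
  have hz₀ : 0 < z := by linarith
  have hsq : z ^ (-(2 * a)) = (z ^ (-a)) ^ 2 := by
    rw [← rpow_natCast, ← rpow_mul hz₀.le]; ring_nf
  rw [hsq]
  exact abs_sq_sub_pow_four_le (Ufun_nonneg hz₀ (by linarith))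
    (Ufun_le_Gamma_mul_rpow_neg hz₀ ha.le) (Ufun_nonneg hz₀ (by linarith))
    (hsq ▸ Ufun_le_Gamma_mul_rpow_neg hz₀ (by linarith)) hc₂.le (by positivity)
    (rpow_le_one_of_one_le_of_nonpos hz (by linarith))
end

section
/- For every real ρ > 0 and every integer T ≥ 1, (1/(T−1)!)·∫₀^∞ ln(1 + ρx)·x^{T−1}·e^{−x} dx = e^{1/ρ} · Σ_{k=0}^{T−1} (1/ρ)^k · Γ(−k, 1/ρ), where Γ(−k, u) := ∫_u^∞ t^{−k−1}·e^{−t} dt is the upper incomplete Gamma function (which is finite for u > 0). -/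
/-- Upper incomplete Gamma function at negative integer order:
`Γ(−k, u) = ∫_u^∞ t^{−k−1}·e^{−t} dt`. -/
noncomputable def incGammaNeg (k : ℕ) (u : ℝ) : ℝ :=
  ∫ t in Set.Ioi u, t ^ (-(k : ℝ) - 1) * Real.exp (-t)

/-!
Put `u = 1 / ρ`. The function `e^{-x} ∑_{j ≤ n} x^j / j!` is the tail of the `Gamma(n + 1, 1)`
distribution, so integrating by parts against it turns the left side into
`∑_{j ≤ n} A_j / j!` with `A_j = ∫₀^∞ x^j e^{-x} / (u + x) dx`. Writing
`x^{j+1} = x^j (u + x) - u x^j` gives `A_{j+1} = j! - u A_j`, and integrating by parts in the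
upper incomplete Gamma function gives `Γ(s + 1, u) = u^s e^{-u} + s Γ(s, u)`; since
`A_0 = e^u Γ(0, u)` after the shift `t = u + x`, induction yields `A_j = j! e^u u^j Γ(-j, u)`.
-/

open MeasureTheory Set Real Filter Topology Finset Nat

lemma integral_Ioi_comp_add_right (f : ℝ → ℝ) (u : ℝ) :
    ∫ x in Ioi 0, f (x + u) = ∫ t in Ioi u, f t := by
  rw [← (measurePreserving_add_right volume u).setIntegral_preimage_emb
    (measurableEmbedding_addRight u) f (Ioi u)]
  simp

lemma integrableOn_pow_mul_exp_neg (j : ℕ) :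
    IntegrableOn (fun x : ℝ => x ^ j * exp (-x)) (Ioi 0) := by
  simpa using integrableOn_rpow_mul_exp_neg_rpow (s := j) (p := 1)
    (by linarith [j.cast_nonneg (α := ℝ)]) one_pos

lemma integral_pow_mul_exp_neg (j : ℕ) : ∫ x in Ioi (0 : ℝ), x ^ j * exp (-x) = j ! := by
  rw [← Gamma_nat_eq_factorial, Gamma_eq_integral (by positivity)]
  refine setIntegral_congr_fun measurableSet_Ioi fun x _ => ?_
  simp [mul_comm]

section UpperIncompleteGamma

variable {u : ℝ}

lemma integrableOn_rpow_mul_exp_neg_Ioi (hu : 0 < u) (s : ℝ) :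
    IntegrableOn (fun t : ℝ => t ^ s * exp (-t)) (Ioi u) := by
  have hcont : ContinuousOn (fun t : ℝ => exp (-t) * t ^ s) (Ici u) := fun t ht =>
    ((continuous_neg.rexp).continuousAt.mul
      (continuousAt_rpow_const t s (Or.inl (hu.trans_le ht).ne'))).continuousWithinAt
  simpa only [mul_comm] using
    integrable_of_isBigO_exp_neg one_half_pos hcont (Gamma_integrand_isLittleO s).isBigO

lemma integral_rpow_mul_exp_neg_Ioi_eq (hu : 0 < u) (s : ℝ) :
    ∫ t in Ioi u, t ^ s * exp (-t) =
      u ^ s * exp (-u) + s * ∫ t in Ioi u, t ^ (s - 1) * exp (-t) := by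
  have hderiv : ∀ t ∈ Ioi u, HasDerivAt (fun t => -(t ^ s * exp (-t)))
      (t ^ s * exp (-t) - s * (t ^ (s - 1) * exp (-t))) t := fun t ht => by
    refine (((hasDerivAt_rpow_const (p := s) (Or.inl (hu.trans ht).ne')).mul
      (hasDerivAt_neg t).exp).neg).congr_deriv ?_
    ring
  have hlim : Tendsto (fun t : ℝ => -(t ^ s * exp (-t))) atTop (𝓝 0) := by
    simpa using (tendsto_rpow_mul_exp_neg_mul_atTop_nhds_zero s 1 one_pos).neg
  have hcont : ContinuousWithinAt (fun t : ℝ => -(t ^ s * exp (-t))) (Ici u) u :=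
    ((continuousAt_rpow_const u s (Or.inl hu.ne')).mul
      (continuous_neg.rexp).continuousAt).neg.continuousWithinAt
  have h := integral_Ioi_of_hasDerivAt_of_tendsto hcont hderiv
    ((integrableOn_rpow_mul_exp_neg_Ioi hu s).sub
      ((integrableOn_rpow_mul_exp_neg_Ioi hu (s - 1)).const_mul s)) hlim
  rw [integral_sub (integrableOn_rpow_mul_exp_neg_Ioi hu s)
    ((integrableOn_rpow_mul_exp_neg_Ioi hu (s - 1)).const_mul s), integral_const_mul] at h
  linarith

lemma incGammaNeg_eq_sub (hu : 0 < u) (k : ℕ) :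
    incGammaNeg k u = u ^ (-(k : ℝ) - 1) * exp (-u) - (k + 1) * incGammaNeg (k + 1) u := by
  have h := integral_rpow_mul_exp_neg_Ioi_eq hu (-(k : ℝ) - 1)
  rw [show -(k : ℝ) - 1 - 1 = -((k + 1 : ℕ) : ℝ) - 1 by push_cast; ring] at h
  rw [incGammaNeg, incGammaNeg, h]
  push_cast
  ring

end UpperIncompleteGamma

section StieltjesTransform

variable {u : ℝ}

lemma integrableOn_pow_mul_exp_neg_div_add (hu : 0 < u) (j : ℕ) :
    IntegrableOn (fun x : ℝ => x ^ j * exp (-x) / (u + x)) (Ioi 0) := by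
  refine ((integrableOn_pow_mul_exp_neg j).div_const u).mono' ?_ ?_
  · exact ContinuousOn.aestronglyMeasurable (ContinuousOn.div (by fun_prop) (by fun_prop)
      fun x (hx : 0 < x) => by positivity) measurableSet_Ioi
  · refine (ae_restrict_iff' measurableSet_Ioi).mpr (ae_of_all _ fun x (hx : 0 < x) => ?_)
    rw [norm_of_nonneg (by positivity)]
    gcongr
    linarith

lemma integral_pow_succ_mul_exp_neg_div_add (hu : 0 < u) (j : ℕ) :
    ∫ x in Ioi 0, x ^ (j + 1) * exp (-x) / (u + x) =
      (j ! : ℝ) - u * ∫ x in Ioi 0, x ^ j * exp (-x) / (u + x) := by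
  rw [← integral_pow_mul_exp_neg j, ← integral_const_mul, ← integral_sub
    (integrableOn_pow_mul_exp_neg j) ((integrableOn_pow_mul_exp_neg_div_add hu j).const_mul u)]
  refine setIntegral_congr_fun measurableSet_Ioi fun x (hx : 0 < x) => ?_
  field_simp
  ring

lemma integral_exp_neg_div_add (hu : 0 < u) :
    ∫ x in Ioi 0, exp (-x) / (u + x) = exp u * incGammaNeg 0 u := by
  rw [incGammaNeg, ← integral_Ioi_comp_add_right _ u, ← integral_const_mul]
  refine setIntegral_congr_fun measurableSet_Ioi fun x (hx : 0 < x) => ?_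
  rw [Nat.cast_zero, neg_zero, zero_sub, rpow_neg_one, neg_add, exp_add, add_comm x u]
  field_simp
  rw [← exp_add, add_neg_cancel, exp_zero]

lemma integral_pow_mul_exp_neg_div_add (hu : 0 < u) (j : ℕ) :
    ∫ x in Ioi 0, x ^ j * exp (-x) / (u + x) = j ! * (exp u * u ^ j * incGammaNeg j u) := by
  induction j with
  | zero => simpa using integral_exp_neg_div_add hu
  | succ j ih =>
    have hpow : u ^ (j + 1) * u ^ (-(j : ℝ) - 1) = 1 := by
      rw [← rpow_natCast, ← rpow_add hu]
      push_cast
      ring_nf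
      exact rpow_zero u
    have hexp : exp u * exp (-u) = 1 := by rw [← exp_add, add_neg_cancel, exp_zero]
    have hcancel : exp u * u ^ (j + 1) * (u ^ (-(j : ℝ) - 1) * exp (-u)) = 1 := by
      calc _ = (u ^ (j + 1) * u ^ (-(j : ℝ) - 1)) * (exp u * exp (-u)) := by ring
        _ = 1 := by rw [hpow, hexp, one_mul]
    rw [integral_pow_succ_mul_exp_neg_div_add hu, ih, incGammaNeg_eq_sub hu j]
    push_cast [Nat.factorial_succ]
    linear_combination (-(j ! : ℝ)) * hcancel

end StieltjesTransform

noncomputable def expTaylor (n : ℕ) (x : ℝ) : ℝ := ∑ j ∈ range (n + 1), x ^ j / j !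

lemma expTaylor_nonneg (n : ℕ) {x : ℝ} (hx : 0 ≤ x) : 0 ≤ expTaylor n x :=
  sum_nonneg fun j _ => by positivity

lemma hasDerivAt_exp_neg_mul_expTaylor (n : ℕ) (x : ℝ) :
    HasDerivAt (fun x => exp (-x) * expTaylor n x) (-(x ^ n * exp (-x) / n !)) x := by
  induction n with
  | zero => simpa [expTaylor] using (hasDerivAt_neg x).exp
  | succ n ih =>
    have hsplit : (fun x => exp (-x) * expTaylor (n + 1) x) =
        fun x => exp (-x) * expTaylor n x + exp (-x) * (x ^ (n + 1) / (n + 1)!) := by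
      funext x
      rw [expTaylor, sum_range_succ, ← expTaylor]
      ring
    rw [hsplit]
    refine (ih.add ((hasDerivAt_neg x).exp.mul
      ((hasDerivAt_pow (n + 1) x).div_const _))).congr_deriv ?_
    push_cast [factorial_succ]
    field_simp
    ring

lemma tendsto_mul_exp_neg_mul_expTaylor (n : ℕ) :
    Tendsto (fun x => x * (exp (-x) * expTaylor n x)) atTop (𝓝 0) := by
  have h := tendsto_finsetSum (range (n + 1)) fun j _ =>
    (tendsto_pow_mul_exp_neg_atTop_nhds_zero (j + 1)).div_const (j ! : ℝ)
  simp only [zero_div, sum_const_zero] at h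
  refine h.congr fun x => ?_
  rw [expTaylor, mul_sum, mul_sum]
  refine sum_congr rfl fun j _ => ?_
  ring

lemma abs_log_one_add_mul_le {ρ x : ℝ} (hρ : 0 ≤ ρ) (hx : 0 ≤ x) :
    |log (1 + ρ * x)| ≤ ρ * x := by
  have hpos : 0 < 1 + ρ * x := by positivity
  rw [abs_of_nonneg (log_nonneg (by nlinarith))]
  linarith [log_le_sub_one_of_pos hpos]

lemma integrableOn_log_one_add_mul_mul_pow_mul_exp_neg {ρ : ℝ} (hρ : 0 ≤ ρ) (n : ℕ) :
    IntegrableOn (fun x => log (1 + ρ * x) * (x ^ n * exp (-x))) (Ioi 0) := by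
  refine ((integrableOn_pow_mul_exp_neg (n + 1)).const_mul ρ).mono' ?_ ?_
  · refine ContinuousOn.aestronglyMeasurable ?_ measurableSet_Ioi
    exact (ContinuousOn.log (by fun_prop) fun x (hx : 0 < x) => by positivity).mul (by fun_prop)
  · refine (ae_restrict_iff' measurableSet_Ioi).mpr (ae_of_all _ fun x (hx : 0 < x) => ?_)
    rw [norm_mul, norm_of_nonneg (by positivity : 0 ≤ x ^ n * exp (-x)), Real.norm_eq_abs]
    calc |log (1 + ρ * x)| * (x ^ n * exp (-x)) ≤ ρ * x * (x ^ n * exp (-x)) := by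
          gcongr
          exact abs_log_one_add_mul_le hρ hx.le
      _ = ρ * (x ^ (n + 1) * exp (-x)) := by ring

lemma integral_log_one_add_mul_mul_gamma_density_eq_sum {ρ : ℝ} (hρ : 0 < ρ) (n : ℕ) :
    ∫ x in Ioi 0, log (1 + ρ * x) * (x ^ n * exp (-x) / n !) =
      ∑ j ∈ range (n + 1), (∫ x in Ioi 0, x ^ j * exp (-x) / (ρ⁻¹ + x)) / j ! := by
  have hlog : ∀ x ∈ Ioi (0 : ℝ), HasDerivAt (fun x => log (1 + ρ * x)) (1 / (ρ⁻¹ + x)) x :=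
    fun x (hx : 0 < x) => by
      refine ((((hasDerivAt_id' x).const_mul ρ).const_add 1).log (by positivity)).congr_deriv ?_
      field_simp
  have hv : ∀ x ∈ Ioi (0 : ℝ), HasDerivAt (fun x => -(exp (-x) * expTaylor n x))
      (x ^ n * exp (-x) / n !) x := fun x _ => by
    simpa using (hasDerivAt_exp_neg_mul_expTaylor n x).fun_neg
  have hu'v_eq : (fun x => 1 / (ρ⁻¹ + x) * -(exp (-x) * expTaylor n x)) =
      fun x => -∑ j ∈ range (n + 1), x ^ j * exp (-x) / (ρ⁻¹ + x) / j ! := by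
    funext x
    simp only [expTaylor, mul_neg, mul_sum, neg_inj]
    refine sum_congr rfl fun j _ => ?_
    ring
  have hu'v : IntegrableOn (fun x => 1 / (ρ⁻¹ + x) * -(exp (-x) * expTaylor n x)) (Ioi 0) := by
    rw [hu'v_eq]
    exact (integrable_finsetSum (range (n + 1)) fun j _ =>
      (integrableOn_pow_mul_exp_neg_div_add (inv_pos.mpr hρ) j).div_const _).neg
  have hzero :
      Tendsto (fun x => log (1 + ρ * x) * -(exp (-x) * expTaylor n x)) (𝓝[>] 0) (𝓝 0) := by
    have hc : ContinuousAt (fun x => log (1 + ρ * x) * -(exp (-x) * expTaylor n x)) 0 := by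
      simp only [expTaylor]
      fun_prop (disch := norm_num)
    simpa using hc.tendsto.mono_left nhdsWithin_le_nhds
  have hinfty : Tendsto (fun x => log (1 + ρ * x) * -(exp (-x) * expTaylor n x)) atTop (𝓝 0) := by
    refine squeeze_zero_norm' ?_ (by simpa using (tendsto_mul_exp_neg_mul_expTaylor n).const_mul ρ)
    filter_upwards [eventually_ge_atTop 0] with x hx
    have hE : 0 ≤ exp (-x) * expTaylor n x := mul_nonneg (exp_pos _).le (expTaylor_nonneg n hx)
    rw [norm_mul, norm_neg, Real.norm_eq_abs, Real.norm_eq_abs, abs_of_nonneg hE]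
    calc |log (1 + ρ * x)| * (exp (-x) * expTaylor n x)
        ≤ ρ * x * (exp (-x) * expTaylor n x) := by
          gcongr
          exact abs_log_one_add_mul_le hρ.le hx
      _ = ρ * (x * (exp (-x) * expTaylor n x)) := by ring
  have huv' : IntegrableOn (fun x => log (1 + ρ * x) * (x ^ n * exp (-x) / n !)) (Ioi 0) := by
    have h := (integrableOn_log_one_add_mul_mul_pow_mul_exp_neg hρ.le n).div_const (n ! : ℝ)
    simp only [mul_div_assoc] at h ⊢
    exact h
  rw [integral_Ioi_mul_deriv_eq_deriv_mul hlog hv huv' hu'v hzero hinfty, hu'v_eq, integral_neg,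
    integral_finsetSum _ fun j _ =>
      (integrableOn_pow_mul_exp_neg_div_add (inv_pos.mpr hρ) j).div_const _]
  simp only [sub_zero, zero_sub, neg_neg, integral_div]

/-- For `ρ > 0` and an integer `T ≥ 1`,
`(1/(T−1)!)·∫₀^∞ ln(1 + ρx)·x^{T−1}·e^{−x} dx
  = e^{1/ρ}·Σ_{k=0}^{T−1} (1/ρ)^k·Γ(−k, 1/ρ)`. -/
theorem stmt_16 (ρ : ℝ) (hρ : 0 < ρ) (T : ℕ) (hT : 1 ≤ T) :
    (1 / (Nat.factorial (T - 1) : ℝ)) *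
        ∫ x in Set.Ioi (0 : ℝ), Real.log (1 + ρ * x) * x ^ (T - 1) * Real.exp (-x) =
      Real.exp (1 / ρ) * ∑ k ∈ Finset.range T, (1 / ρ) ^ k * incGammaNeg k (1 / ρ) := by
  obtain ⟨n, rfl⟩ : ∃ n, T = n + 1 := ⟨T - 1, by omega⟩
  rw [Nat.add_sub_cancel, ← integral_const_mul, one_div ρ, mul_sum]
  calc ∫ x in Ioi 0, 1 / (n ! : ℝ) * (log (1 + ρ * x) * x ^ n * exp (-x))
      = ∫ x in Ioi 0, log (1 + ρ * x) * (x ^ n * exp (-x) / n !) := by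
        congr 1 with x
        ring
    _ = ∑ j ∈ range (n + 1), (∫ x in Ioi 0, x ^ j * exp (-x) / (ρ⁻¹ + x)) / j ! :=
        integral_log_one_add_mul_mul_gamma_density_eq_sum hρ n
    _ = ∑ j ∈ range (n + 1), exp ρ⁻¹ * (ρ⁻¹ ^ j * incGammaNeg j ρ⁻¹) := by
        refine sum_congr rfl fun j _ => ?_
        rw [integral_pow_mul_exp_neg_div_add (inv_pos.mpr hρ)]
        field_simp
end

section
/- Under the symmetric MS-selection policy, for every q ∈ 𝒬 it holds that Σ_{j ∈ 𝒬, j ≠ q} M_{q,j} = M·(Q − Q̄ − 1)·(Q − Q̄)/Q. -/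
open scoped Classical

/-- The unique representative in `{1, …, M}` of `j` modulo `M` (for `j ≥ 1`). -/
def sigmaRep (M j : ℕ) : ℕ := (j - 1) % M + 1

/-- The index `m ∈ {1, …, M}` of the block `𝒬_m = {(m−1)L+1, …, mL}` containing `q`. -/
def blk (L q : ℕ) : ℕ := (q - 1) / L + 1

/-- `q ∈ S̄_m = ⋃_{i=1}^{K} 𝒬_{σ(i+m)}`: MS-`q` is discarded by S-RRH-`m`
under the symmetric MS-selection policy. -/
def discardedBy (M L K m q : ℕ) : Prop :=
  ∃ i ∈ Finset.Icc 1 K, blk L q = sigmaRep M (i + m)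

/-- S-RRH-`m` serves MS-`q`. -/
def servesMS (M L K m q : ℕ) : Prop := ¬ discardedBy M L K m q

/-- `M_q`: the number of S-RRHs serving MS-`q`. -/
noncomputable def numServing (M L K q : ℕ) : ℕ :=
  ((Finset.Icc 1 M).filter fun m => servesMS M L K m q).card

/-- `M_{q,j}`: the number of S-RRHs serving both MS-`q` and MS-`j`. -/
noncomputable def numServingBoth (M L K q j : ℕ) : ℕ :=
  ((Finset.Icc 1 M).filter fun m => servesMS M L K m q ∧ servesMS M L K m j).card

/-!
Double counting: `∑_{j ≠ q} M_{q,j}` counts the pairs `(m, j)`, `j ≠ q`, such that S-RRH-`m`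
serves both MS-`q` and MS-`j`. Each S-RRH discards `K` blocks of `L` MSs, hence serves `Q - Q̄`
MSs; and since `σ(i + m) = b` iff `m = σ(b + M - i)`, each block is discarded by exactly `K`
S-RRHs, so `M_q = M - K`. The sum is therefore `(M - K)(Q - Q̄ - 1)`, and `M - K = M(Q - Q̄)/Q`.
-/

open Finset

section Incidence

variable {α β : Type*} [DecidableEq β]

theorem sum_erase_card_filter_and {s : Finset α} {t : Finset β} {R : α → β → Prop} {n : ℕ}
    (hR : ∀ a ∈ s, #{b ∈ t | R a b} = n) {b₀ : β} (hb₀ : b₀ ∈ t) :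
    ∑ b ∈ t.erase b₀, #{a ∈ s | R a b₀ ∧ R a b} = #{a ∈ s | R a b₀} * (n - 1) := by
  calc ∑ b ∈ t.erase b₀, #{a ∈ s | R a b₀ ∧ R a b}
      = ∑ a ∈ s, #((t.erase b₀).bipartiteAbove (fun a b => R a b₀ ∧ R a b) a) :=
        (sum_card_bipartiteAbove_eq_sum_card_bipartiteBelow _).symm
    _ = ∑ a ∈ s with R a b₀, (n - 1) := by
        rw [sum_filter]
        refine sum_congr rfl fun a ha => ?_
        by_cases h : R a b₀
        · simp [bipartiteAbove, h, filter_erase, card_erase_of_mem, hR a ha, hb₀]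
        · simp [bipartiteAbove, h]
    _ = #{a ∈ s | R a b₀} * (n - 1) := by rw [sum_const, smul_eq_mul]

end Incidence

section Blocks

variable {M L : ℕ}

theorem blk_eq_iff {q b : ℕ} (hL : 0 < L) (hq : 1 ≤ q) (hb : 1 ≤ b) :
    blk L q = b ↔ q ∈ Ioc ((b - 1) * L) ((b - 1) * L + L) := by
  have := Nat.div_eq_iff (x := q - 1) (y := b - 1) hL
  rw [blk, mem_Ioc]
  omega

theorem blk_mem_Icc {q : ℕ} (hL : 0 < L) (hq : q ∈ Icc 1 (M * L)) : blk L q ∈ Icc 1 M := by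
  rw [mem_Icc] at hq ⊢
  have := (Nat.div_lt_iff_lt_mul hL).2 (show q - 1 < M * L by omega)
  exact ⟨Nat.le_add_left 1 _, this⟩

theorem card_filter_blk_eq {b : ℕ} (hL : 0 < L) (hb : b ∈ Icc 1 M) :
    #{q ∈ Icc 1 (M * L) | blk L q = b} = L := by
  rw [mem_Icc] at hb
  have hbL : (b - 1) * L + L ≤ M * L := by
    rw [← Nat.succ_mul]
    exact Nat.mul_le_mul_right L (by omega)
  have hfiber : {q ∈ Icc 1 (M * L) | blk L q = b} = Ioc ((b - 1) * L) ((b - 1) * L + L) := by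
    ext q
    rw [mem_filter, mem_Icc]
    constructor
    · rintro ⟨hq, hqb⟩
      exact (blk_eq_iff hL hq.1 hb.1).1 hqb
    · intro hq
      have hq' := mem_Ioc.1 hq
      exact ⟨⟨by omega, by omega⟩, (blk_eq_iff hL (by omega) hb.1).2 hq⟩
  rw [hfiber, Nat.card_Ioc]
  omega

theorem card_filter_blk_mem {T : Finset ℕ} (hL : 0 < L) (hT : T ⊆ Icc 1 M) :
    #{q ∈ Icc 1 (M * L) | blk L q ∈ T} = #T * L := by
  rw [card_eq_sum_card_fiberwise (f := blk L) (s := {q ∈ Icc 1 (M * L) | blk L q ∈ T}) (t := T)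
    fun q hq => (mem_filter.1 hq).2]
  calc ∑ b ∈ T, #{q ∈ {q ∈ Icc 1 (M * L) | blk L q ∈ T} | blk L q = b}
      = ∑ _b ∈ T, L := sum_congr rfl fun b hb => by
        rw [filter_filter, filter_congr fun q _ => and_iff_right_of_imp fun h => h ▸ hb,
          card_filter_blk_eq hL (hT hb)]
    _ = #T * L := by rw [sum_const, smul_eq_mul]

end Blocks

section Rotation

variable {M : ℕ}

theorem sigmaRep_mem_Icc (hM : 0 < M) (x : ℕ) : sigmaRep M x ∈ Icc 1 M := by
  have := Nat.mod_lt (x - 1) hM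
  rw [sigmaRep, mem_Icc]
  omega

theorem sigmaRep_injOn {a : ℕ} (ha : 1 ≤ a) : Set.InjOn (sigmaRep M) (Ico a (a + M)) := by
  intro x hx y hy hxy
  simp only [coe_Ico, Set.mem_Ico] at hx hy
  have hx' : x - 1 ∈ (Ico (a - 1) (a - 1 + M) : Set ℕ) := by
    simp only [coe_Ico, Set.mem_Ico]; omega
  have hy' : y - 1 ∈ (Ico (a - 1) (a - 1 + M) : Set ℕ) := by
    simp only [coe_Ico, Set.mem_Ico]; omega
  have := Nat.mod_injOn_Ico (a - 1) M hx' hy' (by simpa [sigmaRep] using hxy)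
  omega

theorem sigmaRep_eq_iff_modEq {x b : ℕ} (hx : 1 ≤ x) (hb : b ∈ Icc 1 M) :
    sigmaRep M x = b ↔ x ≡ b [MOD M] := by
  rw [mem_Icc] at hb
  have hb' : (b - 1) % M = b - 1 := Nat.mod_eq_of_lt (by omega)
  have hsub : x - 1 ≡ b - 1 [MOD M] ↔ x ≡ b [MOD M] := by
    conv_rhs => rw [← Nat.sub_add_cancel hx, ← Nat.sub_add_cancel hb.1]
    exact ⟨fun h => h.add_right 1, Nat.ModEq.add_right_cancel' 1⟩
  rw [← hsub, Nat.ModEq, hb', sigmaRep]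
  omega

end Rotation

section Policy

variable {M L K : ℕ}

def discardedBlocks (M K m : ℕ) : Finset ℕ := (Icc 1 K).image fun i => sigmaRep M (i + m)

-- `b + M - i` rather than `b - i`, which would truncate at `0` in `ℕ`.
def discardingRRHs (M K b : ℕ) : Finset ℕ := (Icc 1 K).image fun i => sigmaRep M (b + M - i)

theorem discardedBy_iff_blk_mem {m q : ℕ} :
    discardedBy M L K m q ↔ blk L q ∈ discardedBlocks M K m := by
  simp only [discardedBy, discardedBlocks, mem_image, eq_comm]

theorem discardedBlocks_subset (hM : 0 < M) (m : ℕ) : discardedBlocks M K m ⊆ Icc 1 M :=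
  image_subset_iff.2 fun _ _ => sigmaRep_mem_Icc hM _

theorem discardingRRHs_subset (hM : 0 < M) (b : ℕ) : discardingRRHs M K b ⊆ Icc 1 M :=
  image_subset_iff.2 fun _ _ => sigmaRep_mem_Icc hM _

theorem card_discardedBlocks (hK : K ≤ M) (m : ℕ) : #(discardedBlocks M K m) = K := by
  rw [discardedBlocks, card_image_of_injOn, Nat.card_Icc, Nat.add_sub_cancel]
  intro i hi j hj hij
  simp only [coe_Icc, Set.mem_Icc] at hi hj
  have := sigmaRep_injOn (M := M) (a := m + 1) (Nat.le_add_left 1 m)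
    (by simp only [coe_Ico, Set.mem_Ico]; omega) (by simp only [coe_Ico, Set.mem_Ico]; omega) hij
  omega

theorem card_discardingRRHs (hK : K ≤ M) {b : ℕ} (hb : 1 ≤ b) : #(discardingRRHs M K b) = K := by
  rw [discardingRRHs, card_image_of_injOn, Nat.card_Icc, Nat.add_sub_cancel]
  intro i hi j hj hij
  simp only [coe_Icc, Set.mem_Icc] at hi hj
  have := sigmaRep_injOn (M := M) (a := b + M - K) (by omega)
    (by simp only [coe_Ico, Set.mem_Ico]; omega) (by simp only [coe_Ico, Set.mem_Ico]; omega) hij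
  omega

theorem mem_discardedBlocks_iff_mem_discardingRRHs {m b : ℕ} (hK : K ≤ M) (hm : m ∈ Icc 1 M)
    (hb : b ∈ Icc 1 M) : b ∈ discardedBlocks M K m ↔ m ∈ discardingRRHs M K b := by
  simp only [discardedBlocks, discardingRRHs, mem_image]
  refine exists_congr fun i => and_congr_right fun hi => ?_
  have := mem_Icc.1 hi
  have := mem_Icc.1 hm
  have := mem_Icc.1 hb
  rw [sigmaRep_eq_iff_modEq (by omega) hb, sigmaRep_eq_iff_modEq (by omega) hm,
    Nat.modEq_iff_dvd, Nat.modEq_iff_dvd, Nat.cast_sub (by omega)]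
  push_cast
  rw [show (m : ℤ) - (b + M - i) = -((b : ℤ) - (i + m)) - M by ring, dvd_sub_self_right, dvd_neg]

theorem card_filter_servesMS_of_RRH (hM : 0 < M) (hL : 0 < L) (hK : K ≤ M) (m : ℕ) :
    #{q ∈ Icc 1 (M * L) | servesMS M L K m q} = M * L - K * L := by
  have hsplit : #{q ∈ Icc 1 (M * L) | discardedBy M L K m q} +
      #{q ∈ Icc 1 (M * L) | servesMS M L K m q} = #(Icc 1 (M * L)) := by
    convert card_filter_add_card_filter_not (discardedBy M L K m)
  simp only [discardedBy_iff_blk_mem] at hsplit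
  rw [card_filter_blk_mem hL (discardedBlocks_subset hM m), card_discardedBlocks hK,
    Nat.card_Icc] at hsplit
  omega

theorem card_filter_servesMS_of_MS (hM : 0 < M) (hL : 0 < L) (hK : K ≤ M) {q : ℕ}
    (hq : q ∈ Icc 1 (M * L)) : #{m ∈ Icc 1 M | servesMS M L K m q} = M - K := by
  have hb := blk_mem_Icc hL hq
  have hdiscarding : {m ∈ Icc 1 M | discardedBy M L K m q} = discardingRRHs M K (blk L q) := by
    ext m
    rw [mem_filter, discardedBy_iff_blk_mem]
    constructor
    · rintro ⟨hm, h⟩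
      exact (mem_discardedBlocks_iff_mem_discardingRRHs hK hm hb).1 h
    · intro h
      have hm := discardingRRHs_subset hM _ h
      exact ⟨hm, (mem_discardedBlocks_iff_mem_discardingRRHs hK hm hb).2 h⟩
  have hsplit : #{m ∈ Icc 1 M | discardedBy M L K m q} +
      #{m ∈ Icc 1 M | servesMS M L K m q} = #(Icc 1 M) := by
    convert card_filter_add_card_filter_not (discardedBy M L K · q)
  rw [hdiscarding, card_discardingRRHs hK (mem_Icc.1 hb).1, Nat.card_Icc] at hsplit
  omega

end Policy

theorem stmt_18_general (M Q Qbar L K : ℕ) (hQ : 0 < Q)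
    (hlt : Qbar < Q) (hL : Q = M * L) (hK : K * Q = M * Qbar) :
    ∀ q ∈ Finset.Icc 1 Q,
      (∑ j ∈ (Finset.Icc 1 Q).erase q, (numServingBoth M L K q j : ℚ)) =
        (M : ℚ) * ((Q : ℚ) - (Qbar : ℚ) - 1) * ((Q : ℚ) - (Qbar : ℚ)) / (Q : ℚ) := by
  intro q hq
  obtain ⟨hM, hL0⟩ := CanonicallyOrderedAdd.mul_pos.1 (hL ▸ hQ)
  have hKM : K < M := Nat.lt_of_mul_lt_mul_right (hK ▸ Nat.mul_lt_mul_of_pos_left hlt hM)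
  have hQbar : Qbar = K * L := Nat.eq_of_mul_eq_mul_left hM (by rw [← hK, hL]; ring)
  subst hL hQbar
  have hcount : ∑ j ∈ (Icc 1 (M * L)).erase q, numServingBoth M L K q j
      = (M - K) * (M * L - K * L - 1) := by
    simp only [numServingBoth]
    rw [sum_erase_card_filter_and (fun m _ => card_filter_servesMS_of_RRH hM hL0 hKM.le m) hq,
      card_filter_servesMS_of_MS hM hL0 hKM.le hq]
  have hKL : K * L < M * L := Nat.mul_lt_mul_of_pos_right hKM hL0
  rw [← Nat.cast_sum, hcount, Nat.cast_mul, Nat.cast_sub hKM.le, Nat.cast_sub (by omega),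
    Nat.cast_sub hKL.le]
  have : (L : ℚ) ≠ 0 := by positivity
  field_simp
  push_cast
  ring

/-- Under the symmetric MS-selection policy,
`Σ_{j ≠ q} M_{q,j} = M·(Q − Q̄ − 1)·(Q − Q̄)/Q`. -/
theorem stmt_18 (M Q Qbar L K : ℕ) (hM : 0 < M) (hQ : 0 < Q) (hQbar : 0 < Qbar)
    (hlt : Qbar < Q) (hL : Q = M * L) (hK : K * Q = M * Qbar) :
    ∀ q ∈ Finset.Icc 1 Q,
      (∑ j ∈ (Finset.Icc 1 Q).erase q, (numServingBoth M L K q j : ℚ)) =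
        (M : ℚ) * ((Q : ℚ) - (Qbar : ℚ) - 1) * ((Q : ℚ) - (Qbar : ℚ)) / (Q : ℚ) :=
  stmt_18_general M Q Qbar L K hQ hlt hL hK
end
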